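/- Let p, k, l, d be positive integers with 1/l = 1/2 - 1/p - 1/k and 1/d = 1/2 - 3/p. The group with presentation ⟨J, P, R₁, R₂ | J³ = R₁^p = R₂^p = (P⁻¹J)^k = (R₂R₁J)^l = P^{3d} = 1, R₂ = P R₁ P⁻¹, R₂ = J R₁ J⁻¹, P = R₁R₂⟩ is isomorphic to the group with presentation ⟨J, R₁ | J³ = R₁^p = (R₁J)^{2k} = (R₁J²)^{2l} = (R₁JR₁J²)^{3d} = 1, R₁ J R₁ J² R₁ J R₁^{p-1} J² R₁^{p-1} J R₁^{p-1} J² = 1⟩, via the map determined by sending J to J, R₁ to R₁, R₂ to J R₁ J⁻¹ and P to R₁ · J R₁ J⁻¹. -/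

import Mathlib

/-- Generators of the two-generator presentations of the 3-fold Deligne-Mostow lattices. -/
inductive Gen2 | J | R

/-- Generators of the four-generator presentations of the 3-fold Deligne-Mostow lattices. -/
inductive Gen4 | J | P | R₁ | R₂

namespace FourGen

/-- Shorthand for the free group generators. -/
def J : FreeGroup Gen4 := FreeGroup.of Gen4.J
def P : FreeGroup Gen4 := FreeGroup.of Gen4.P
def R₁ : FreeGroup Gen4 := FreeGroup.of Gen4.R₁
def R₂ : FreeGroup Gen4 := FreeGroup.of Gen4.R₂

end FourGen

/-- The four-generator presentation of the type four Deligne-Mostow lattice: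
`J³ = R₁ᵖ = R₂ᵖ = (P⁻¹J)ᵏ = (R₂R₁J)ˡ = P³ᵈ = 1`, `R₂ = PR₁P⁻¹`, `R₂ = JR₁J⁻¹`, `P = R₁R₂`. -/
def rels4Four (p k l d : ℕ) : Set (FreeGroup Gen4) :=
  { FourGen.J ^ 3,
    FourGen.R₁ ^ p,
    FourGen.R₂ ^ p,
    (FourGen.P⁻¹ * FourGen.J) ^ k,
    (FourGen.R₂ * FourGen.R₁ * FourGen.J) ^ l,
    FourGen.P ^ (3 * d),
    FourGen.R₂ * (FourGen.P * FourGen.R₁ * FourGen.P⁻¹)⁻¹,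
    FourGen.R₂ * (FourGen.J * FourGen.R₁ * FourGen.J⁻¹)⁻¹,
    FourGen.P * (FourGen.R₁ * FourGen.R₂)⁻¹ }

/-- Relators of the two-generator presentation of type four Deligne-Mostow lattices. -/
def relsFour (p k l d : ℕ) : Set (FreeGroup Gen2) :=
  { (FreeGroup.of Gen2.J) ^ 3, (FreeGroup.of Gen2.R) ^ p,
    (FreeGroup.of Gen2.R * FreeGroup.of Gen2.J) ^ (2 * k),
    (FreeGroup.of Gen2.R * (FreeGroup.of Gen2.J) ^ 2) ^ (2 * l),
    (FreeGroup.of Gen2.R * FreeGroup.of Gen2.J * FreeGroup.of Gen2.R *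
      (FreeGroup.of Gen2.J) ^ 2) ^ (3 * d),
    FreeGroup.of Gen2.R * FreeGroup.of Gen2.J * FreeGroup.of Gen2.R *
      (FreeGroup.of Gen2.J) ^ 2 * FreeGroup.of Gen2.R * FreeGroup.of Gen2.J *
      (FreeGroup.of Gen2.R) ^ (p - 1) * (FreeGroup.of Gen2.J) ^ 2 *
      (FreeGroup.of Gen2.R) ^ (p - 1) * FreeGroup.of Gen2.J *
      (FreeGroup.of Gen2.R) ^ (p - 1) * (FreeGroup.of Gen2.J) ^ 2 }

/-!
The relations `R₂ = JR₁J⁻¹` and `P = R₁R₂` eliminate `R₂` and `P`. After this substitution each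
remaining four-generator relation becomes a two-generator one, using `J⁻¹ = J²` (from `J³ = 1`):
`R₂ᵖ` is conjugate to `R₁ᵖ`, `P⁻¹J` to `(R₁J)⁻²`, `R₂R₁J` to `(R₁J²)²`, `P = R₁JR₁J²`, and
`R₂ = PR₁P⁻¹` is the long word relation once `R₁ᵖ⁻¹ = R₁⁻¹`.
-/

theorem pow_sub_one_eq_inv {G : Type*} [Group G] {a : G} {n : ℕ} (hn : n ≠ 0) (h : a ^ n = 1) :
    a ^ (n - 1) = a⁻¹ :=
  eq_inv_of_mul_eq_one_left (by rw [pow_sub_one_mul hn, h])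

theorem IsConj.pow_eq_one_iff {G : Type*} [Group G] {a b : G} (h : IsConj a b) (n : ℕ) :
    a ^ n = 1 ↔ b ^ n = 1 := by
  rw [← isConj_one_right, ← isConj_one_right (a := b ^ n)]
  exact ⟨fun h₁ => h₁.trans (h.pow n), fun h₁ => h₁.trans (h.pow n).symm⟩

theorem PresentedGroup.lift_of_eq_one {α : Type*} {rels : Set (FreeGroup α)} {w : FreeGroup α}
    (hw : w ∈ rels) : FreeGroup.lift (PresentedGroup.of (rels := rels)) w = 1 :=
  (FreeGroup.lift_unique (PresentedGroup.mk rels) fun _ => rfl).symm.trans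
    (PresentedGroup.one_of_mem hw)

section Relations

variable {G : Type*} [Group G] (p k l d : ℕ)

def Rels4FourHold (J P R₁ R₂ : G) : Prop :=
  J ^ 3 = 1 ∧ R₁ ^ p = 1 ∧ R₂ ^ p = 1 ∧ (P⁻¹ * J) ^ k = 1 ∧ (R₂ * R₁ * J) ^ l = 1 ∧
    P ^ (3 * d) = 1 ∧ R₂ = P * R₁ * P⁻¹ ∧ R₂ = J * R₁ * J⁻¹ ∧ P = R₁ * R₂

def RelsFourHold (J R : G) : Prop :=
  J ^ 3 = 1 ∧ R ^ p = 1 ∧ (R * J) ^ (2 * k) = 1 ∧ (R * J ^ 2) ^ (2 * l) = 1 ∧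
    (R * J * R * J ^ 2) ^ (3 * d) = 1 ∧
    R * J * R * J ^ 2 * R * J * R ^ (p - 1) * J ^ 2 * R ^ (p - 1) * J * R ^ (p - 1) * J ^ 2 = 1

theorem forall_lift_rels4Four_eq_one_iff (f : Gen4 → G) :
    (∀ w ∈ rels4Four p k l d, FreeGroup.lift f w = 1) ↔
      Rels4FourHold p k l d (f .J) (f .P) (f .R₁) (f .R₂) := by
  simp only [rels4Four, Rels4FourHold, Set.forall_mem_insert, Set.mem_singleton_iff, forall_eq,
    FourGen.J, FourGen.P, FourGen.R₁, FourGen.R₂, map_pow, map_mul, map_inv,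
    FreeGroup.lift_apply_of, mul_inv_eq_one]

theorem forall_lift_relsFour_eq_one_iff (f : Gen2 → G) :
    (∀ w ∈ relsFour p k l d, FreeGroup.lift f w = 1) ↔ RelsFourHold p k l d (f .J) (f .R) := by
  simp only [relsFour, RelsFourHold, Set.forall_mem_insert, Set.mem_singleton_iff, forall_eq,
    map_pow, map_mul, FreeGroup.lift_apply_of]

end Relations

section OrderThree

variable {G : Type*} [Group G] {j r : G} (hj : j ^ 3 = 1)
include hj

theorem sq_eq_inv_of_pow_three : j ^ 2 = j⁻¹ :=
  pow_sub_one_eq_inv three_ne_zero hj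

theorem isConj_inv_mul_of_pow_three :
    IsConj ((r * (j * r * j⁻¹))⁻¹ * j) ((r * j) ^ 2)⁻¹ :=
  isConj_iff.mpr ⟨j, calc
    j * ((r * (j * r * j⁻¹))⁻¹ * j) * j⁻¹ = j ^ 2 * r⁻¹ * j⁻¹ * r⁻¹ := by simp only [sq]; group
    _ = ((r * j) ^ 2)⁻¹ := by rw [sq_eq_inv_of_pow_three hj, sq]; group⟩

theorem isConj_conj_mul_mul_of_pow_three :
    IsConj (j * r * j⁻¹ * r * j) ((r * j ^ 2) ^ 2) :=
  isConj_iff.mpr ⟨j⁻¹, calc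
    j⁻¹ * (j * r * j⁻¹ * r * j) * j⁻¹⁻¹ = r * j⁻¹ * r * j ^ 2 := by simp only [sq]; group
    _ = (r * j ^ 2) ^ 2 := by rw [← sq_eq_inv_of_pow_three hj]; simp only [sq, mul_assoc]⟩

theorem mul_conj_eq_of_pow_three : r * (j * r * j⁻¹) = r * j * r * j ^ 2 := by
  rw [sq_eq_inv_of_pow_three hj]; group

theorem relator_eq_conj_mul_inv_of_pow_three {n : ℕ} (hn : n ≠ 0) (hr : r ^ n = 1) :
    r * j * r * j ^ 2 * r * j * r ^ (n - 1) * j ^ 2 * r ^ (n - 1) * j * r ^ (n - 1) * j ^ 2 =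
      r * (j * r * j⁻¹) * r * (r * (j * r * j⁻¹))⁻¹ * (j * r * j⁻¹)⁻¹ := by
  rw [sq_eq_inv_of_pow_three hj, pow_sub_one_eq_inv hn hr]; group

end OrderThree

section Elimination

variable {G : Type*} [Group G] {p : ℕ} (k l d : ℕ)

theorem rels4FourHold_iff_relsFourHold (hp : p ≠ 0) {j r : G} :
    Rels4FourHold p k l d j (r * (j * r * j⁻¹)) r (j * r * j⁻¹) ↔ RelsFourHold p k l d j r := by
  refine and_congr_right fun hj => and_congr_right fun hr => ?_
  have hR₂ : (j * r * j⁻¹) ^ p = 1 := by rw [conj_pow, hr, mul_one, mul_inv_cancel]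
  have hk : ((r * (j * r * j⁻¹))⁻¹ * j) ^ k = 1 ↔ (r * j) ^ (2 * k) = 1 := by
    rw [(isConj_inv_mul_of_pow_three hj).pow_eq_one_iff, inv_pow, inv_eq_one, pow_mul]
  have hl : (j * r * j⁻¹ * r * j) ^ l = 1 ↔ (r * j ^ 2) ^ (2 * l) = 1 := by
    rw [(isConj_conj_mul_mul_of_pow_three hj).pow_eq_one_iff, pow_mul]
  have hW : j * r * j⁻¹ = r * (j * r * j⁻¹) * r * (r * (j * r * j⁻¹))⁻¹ ↔
      r * j * r * j ^ 2 * r * j * r ^ (p - 1) * j ^ 2 * r ^ (p - 1) * j * r ^ (p - 1) * j ^ 2 = 1 := by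
    rw [relator_eq_conj_mul_inv_of_pow_three hj hp hr, mul_inv_eq_one, eq_comm]
  rw [hk, hl, hW, mul_conj_eq_of_pow_three hj]
  simp only [hR₂, true_and, and_true]

theorem rels4FourHold_iff (hp : p ≠ 0) {J P R₁ R₂ : G} :
    Rels4FourHold p k l d J P R₁ R₂ ↔
      R₂ = J * R₁ * J⁻¹ ∧ P = R₁ * R₂ ∧ RelsFourHold p k l d J R₁ := by
  refine ⟨fun h => ?_, ?_⟩
  · obtain ⟨-, -, -, -, -, -, -, rfl, rfl⟩ := id h
    exact ⟨rfl, rfl, (rels4FourHold_iff_relsFourHold k l d hp).mp h⟩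
  · rintro ⟨rfl, rfl, h⟩
    exact (rels4FourHold_iff_relsFourHold k l d hp).mpr h

end Elimination

def fourGenImages {G : Type*} [Group G] (j r : G) : Gen4 → G
  | .J => j
  | .P => r * (j * r * j⁻¹)
  | .R₁ => r
  | .R₂ => j * r * j⁻¹

def twoGenImages {G : Type*} [Group G] (j r : G) : Gen2 → G
  | .J => j
  | .R => r

section Presentations

variable (p k l d : ℕ)

theorem relsFourHold_of :
    RelsFourHold p k l d (PresentedGroup.of Gen2.J : PresentedGroup (relsFour p k l d))
      (PresentedGroup.of Gen2.R) :=
  (forall_lift_relsFour_eq_one_iff p k l d _).mp fun _ => PresentedGroup.lift_of_eq_one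

theorem rels4FourHold_of :
    Rels4FourHold p k l d (PresentedGroup.of Gen4.J : PresentedGroup (rels4Four p k l d))
      (PresentedGroup.of Gen4.P) (PresentedGroup.of Gen4.R₁) (PresentedGroup.of Gen4.R₂) :=
  (forall_lift_rels4Four_eq_one_iff p k l d _).mp fun _ => PresentedGroup.lift_of_eq_one

variable {p} (hp : p ≠ 0)

def rels4FourToRelsFour : PresentedGroup (rels4Four p k l d) →* PresentedGroup (relsFour p k l d) :=
  PresentedGroup.toGroup ((forall_lift_rels4Four_eq_one_iff p k l d
    (fourGenImages (G := PresentedGroup (relsFour p k l d)) (.of .J) (.of .R))).mpr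
      ((rels4FourHold_iff k l d hp).mpr ⟨rfl, rfl, relsFourHold_of p k l d⟩))

def relsFourToRels4Four : PresentedGroup (relsFour p k l d) →* PresentedGroup (rels4Four p k l d) :=
  PresentedGroup.toGroup ((forall_lift_relsFour_eq_one_iff p k l d
    (twoGenImages (G := PresentedGroup (rels4Four p k l d)) (.of .J) (.of .R₁))).mpr
      ((rels4FourHold_iff k l d hp).mp (rels4FourHold_of p k l d)).2.2)

theorem relsFourToRels4Four_comp_rels4FourToRelsFour :
    (relsFourToRels4Four k l d hp).comp (rels4FourToRelsFour k l d hp) = MonoidHom.id _ := by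
  obtain ⟨hR₂, hP, -⟩ := (rels4FourHold_iff k l d hp).mp (rels4FourHold_of p k l d)
  refine PresentedGroup.ext fun x => ?_
  cases x <;> simp [rels4FourToRelsFour, relsFourToRels4Four, fourGenImages, twoGenImages, hP, hR₂]

theorem rels4FourToRelsFour_comp_relsFourToRels4Four :
    (rels4FourToRelsFour k l d hp).comp (relsFourToRels4Four k l d hp) = MonoidHom.id _ :=
  PresentedGroup.ext fun x => by
    cases x <;> simp [rels4FourToRelsFour, relsFourToRels4Four, fourGenImages, twoGenImages]

end Presentations

theorem typeFour_presentations_isomorphic_general (p k l d : ℕ) (hp : 0 < p) :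
    letI rels4 := rels4Four p k l d
    letI rels2 := relsFour p k l d
    ∃ e : PresentedGroup rels4 ≃* PresentedGroup rels2,
      e (PresentedGroup.of Gen4.J) = PresentedGroup.of Gen2.J ∧
      e (PresentedGroup.of Gen4.R₁) = PresentedGroup.of Gen2.R ∧
      e (PresentedGroup.of Gen4.R₂) =
        PresentedGroup.of Gen2.J * PresentedGroup.of Gen2.R * (PresentedGroup.of Gen2.J)⁻¹ ∧
      e (PresentedGroup.of Gen4.P) =
        PresentedGroup.of Gen2.R * (PresentedGroup.of Gen2.J * PresentedGroup.of Gen2.R * (PresentedGroup.of Gen2.J)⁻¹) :=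
  ⟨(rels4FourToRelsFour k l d hp.ne').toMulEquiv (relsFourToRels4Four k l d hp.ne')
    (relsFourToRels4Four_comp_rels4FourToRelsFour k l d hp.ne')
    (rels4FourToRelsFour_comp_relsFourToRels4Four k l d hp.ne'), rfl, rfl, rfl, rfl⟩

/-- The four-generator presentation of a type four 3-fold Deligne-Mostow lattice is isomorphic to
its two-generator presentation, via `J ↦ J`, `R₁ ↦ R₁`, `R₂ ↦ JR₁J⁻¹`, `P ↦ R₁·(JR₁J⁻¹)`. -/
theorem typeFour_presentations_isomorphic (p k l d : ℕ) (hp : 0 < p) (hk : 0 < k)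
    (hl : 0 < l) (hd : 0 < d)
    (hpkl : (1 : ℚ) / l = 1 / 2 - 1 / p - 1 / k) (hpd : (1 : ℚ) / d = 1 / 2 - 3 / p) :
    letI rels4 := rels4Four p k l d
    letI rels2 := relsFour p k l d
    ∃ e : PresentedGroup rels4 ≃* PresentedGroup rels2,
      e (PresentedGroup.of Gen4.J) = PresentedGroup.of Gen2.J ∧
      e (PresentedGroup.of Gen4.R₁) = PresentedGroup.of Gen2.R ∧
      e (PresentedGroup.of Gen4.R₂) =
        PresentedGroup.of Gen2.J * PresentedGroup.of Gen2.R * (PresentedGroup.of Gen2.J)⁻¹ ∧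
      e (PresentedGroup.of Gen4.P) =
        PresentedGroup.of Gen2.R * (PresentedGroup.of Gen2.J * PresentedGroup.of Gen2.R * (PresentedGroup.of Gen2.J)⁻¹) :=
  typeFour_presentations_isomorphic_general p k l d hp
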